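/- arXiv:1312.4471 — 2 statements merged into one kernel-verified Lean document; each statement's English description precedes it below -/
import Mathlib

section
/- Define f on the annulus {z ∈ ℝ^k : 1/2 < |z| < 1} by f(z) = −log(1−|z|). Then for every r ∈ (1/2,1), every z with r < |z| < 1, and every y ∈ ℝ^k, the Hessian satisfies yᵀ D²f(z) y ≥ γ |Df(z)·y|², where γ = 2 − 1/r > 0. -/
/-!
Near `z`, `f w = G (‖w‖ ^ 2)` with `G u = -log (1 - √u)`. For such a radial function the gradient
is `y ↦ 2 G' ⟪z, y⟫` and the Hessian is `y ↦ 2 G' ‖y‖² + 4 G'' ⟪z, y⟫²`, so by Cauchy–Schwarz the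
Hessian dominates the squared gradient as soon as `G' ≥ 0` and `4 u G'² ≤ 2 G' + 4 u G''`. For this
`G` the latter is an equality (`exp (-f) = 1 - ‖z‖` is affine along rays). Hence
`D²f(z)(y, y) ≥ (Df(z) y)² ≥ (2 - 1/r) (Df(z) y)²`, because `2 - 1/r ≤ 1`.
-/

open Real Filter Topology Set
open scoped RealInnerProductSpace

section RadialFunction

variable {E : Type*} [NormedAddCommGroup E] [InnerProductSpace ℝ E]

theorem HasDerivAt.hasFDerivAt_comp_norm_sq {φ : ℝ → ℝ} {a : ℝ} {z : E}
    (hφ : HasDerivAt φ a (‖z‖ ^ 2)) :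
    HasFDerivAt (fun w => φ (‖w‖ ^ 2)) ((2 * a) • innerSL ℝ z) z := by
  refine (hφ.comp_hasFDerivAt z (hasStrictFDerivAt_norm_sq z).hasFDerivAt).congr_fderiv ?_
  ext y
  simp only [smul_apply, coe_innerSL_apply, nsmul_eq_mul, Nat.cast_ofNat, smul_eq_mul]
  ring

theorem iteratedFDeriv_two_comp_norm_sq_apply {φ φ' : ℝ → ℝ} {b : ℝ} {z : E}
    (hφ : ∀ᶠ u in 𝓝 (‖z‖ ^ 2), HasDerivAt φ (φ' u) u) (hφ' : HasDerivAt φ' b (‖z‖ ^ 2))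
    (y : E) :
    iteratedFDeriv ℝ 2 (fun w => φ (‖w‖ ^ 2)) z ![y, y] =
      2 * φ' (‖z‖ ^ 2) * ‖y‖ ^ 2 + 4 * b * ⟪z, y⟫ ^ 2 := by
  have hfderiv : fderiv ℝ (fun w => φ (‖w‖ ^ 2)) =ᶠ[𝓝 z]
      fun w => (2 * φ' (‖w‖ ^ 2)) • innerSL ℝ w := by
    filter_upwards [((continuous_norm.pow 2).tendsto z).eventually hφ] with w hw
    exact hw.hasFDerivAt_comp_norm_sq.fderiv
  have hderiv : HasFDerivAt (fun w => (2 * φ' (‖w‖ ^ 2)) • innerSL ℝ w) _ z :=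
    (hφ'.hasFDerivAt_comp_norm_sq.const_mul 2).smul (innerSL ℝ (E := E)).hasFDerivAt
  rw [iteratedFDeriv_two_apply, hfderiv.fderiv_eq, hderiv.fderiv]
  simp only [Matrix.cons_val_zero, Matrix.cons_val_one, Matrix.cons_val_fin_one, add_apply,
    smul_apply, ContinuousLinearMap.smulRight_apply, innerSL_apply_apply, smul_eq_mul]
  rw [innerSL_apply_apply, real_inner_self_eq_norm_sq]
  ring

theorem sq_fderiv_comp_norm_sq_le_iteratedFDeriv_two {φ φ' : ℝ → ℝ} {b : ℝ} {z : E}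
    (hφ : ∀ᶠ u in 𝓝 (‖z‖ ^ 2), HasDerivAt φ (φ' u) u) (hφ' : HasDerivAt φ' b (‖z‖ ^ 2))
    (hz : z ≠ 0) (hpos : 0 ≤ φ' (‖z‖ ^ 2))
    (hode : 4 * ‖z‖ ^ 2 * φ' (‖z‖ ^ 2) ^ 2 ≤ 2 * φ' (‖z‖ ^ 2) + 4 * ‖z‖ ^ 2 * b) (y : E) :
    fderiv ℝ (fun w => φ (‖w‖ ^ 2)) z y ^ 2 ≤
      iteratedFDeriv ℝ 2 (fun w => φ (‖w‖ ^ 2)) z ![y, y] := by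
  rw [hφ.self_of_nhds.hasFDerivAt_comp_norm_sq.fderiv,
    iteratedFDeriv_two_comp_norm_sq_apply hφ hφ' y]
  simp only [smul_apply, innerSL_apply_apply, smul_eq_mul]
  have hq : 0 < ‖z‖ ^ 2 := by positivity
  have hCS : ⟪z, y⟫ ^ 2 ≤ ‖z‖ ^ 2 * ‖y‖ ^ 2 := by
    rw [← mul_pow, ← sq_abs]
    exact pow_le_pow_left₀ (abs_nonneg _) (abs_real_inner_le_norm z y) 2
  refine le_of_mul_le_mul_left ?_ hq
  nlinarith [mul_le_mul_of_nonneg_right hode (sq_nonneg ⟪z, y⟫),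
    mul_le_mul_of_nonneg_left hCS hpos]

end RadialFunction

noncomputable def negLogOneSubSqrt (u : ℝ) : ℝ := -log (1 - √u)

noncomputable def negLogOneSubSqrtDeriv (u : ℝ) : ℝ := (2 * (√u - u))⁻¹

noncomputable def negLogOneSubSqrtDeriv2 (u : ℝ) : ℝ := (2 * √u - 1) / (4 * √u * (√u - u) ^ 2)

section NegLogOneSubSqrt

variable {u : ℝ} (hu : u ∈ Ioo 0 1)
include hu

theorem sqrt_pos_of_mem_Ioo : 0 < √u := sqrt_pos.2 hu.1

theorem sqrt_lt_one_of_mem_Ioo : √u < 1 := (sqrt_lt' one_pos).2 (by simpa using hu.2)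

theorem sqrt_sub_self_pos : 0 < √u - u := by
  have hs := sqrt_pos_of_mem_Ioo hu
  have hs1 := sqrt_lt_one_of_mem_Ioo hu
  nlinarith [sq_sqrt hu.1.le]

theorem negLogOneSubSqrtDeriv_pos : 0 < negLogOneSubSqrtDeriv u := by
  have := sqrt_sub_self_pos hu
  unfold negLogOneSubSqrtDeriv
  positivity

theorem hasDerivAt_negLogOneSubSqrt :
    HasDerivAt negLogOneSubSqrt (negLogOneSubSqrtDeriv u) u := by
  have hs := sqrt_pos_of_mem_Ioo hu
  have hs1 := sqrt_lt_one_of_mem_Ioo hu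
  have hsqrt := hasDerivAt_sqrt hu.1.ne'
  refine (((hsqrt.const_sub 1).log (by linarith)).neg).congr_deriv ?_
  have hfactor : √u - u = √u * (1 - √u) := by linear_combination sq_sqrt hu.1.le
  rw [negLogOneSubSqrtDeriv, hfactor]
  field_simp

theorem hasDerivAt_negLogOneSubSqrtDeriv :
    HasDerivAt negLogOneSubSqrtDeriv (negLogOneSubSqrtDeriv2 u) u := by
  have hs := sqrt_pos_of_mem_Ioo hu
  have hd := sqrt_sub_self_pos hu
  refine ((((hasDerivAt_sqrt hu.1.ne').sub (hasDerivAt_id u)).const_mul 2).inv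
    (by positivity)).congr_deriv ?_
  rw [negLogOneSubSqrtDeriv2, Pi.sub_apply, id]
  field_simp
  ring

theorem four_mul_mul_negLogOneSubSqrtDeriv_sq :
    4 * u * negLogOneSubSqrtDeriv u ^ 2 =
      2 * negLogOneSubSqrtDeriv u + 4 * u * negLogOneSubSqrtDeriv2 u := by
  have hs := sqrt_pos_of_mem_Ioo hu
  have hd := sqrt_sub_self_pos hu
  rw [negLogOneSubSqrtDeriv, negLogOneSubSqrtDeriv2]
  field_simp
  linear_combination (-4) * sq_sqrt hu.1.le

end NegLogOneSubSqrt

/-- The logarithmic potential `f(z) = -log(1-|z|)` satisfies the Hessian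
estimate `yᵀD²f(z)y ≥ (2 - 1/r)|Df(z)·y|²` on the annulus `r < |z| < 1`. -/
theorem stmt_14 {k : ℕ} (f : EuclideanSpace ℝ (Fin k) → ℝ)
    (hf : ∀ z : EuclideanSpace ℝ (Fin k), 1/2 < ‖z‖ → ‖z‖ < 1 →
      f z = -Real.log (1 - ‖z‖)) :
    ∀ r : ℝ, 1/2 < r → r < 1 →
      ∀ z : EuclideanSpace ℝ (Fin k), r < ‖z‖ → ‖z‖ < 1 →
        ∀ y : EuclideanSpace ℝ (Fin k),
          (2 - 1/r) * (fderiv ℝ f z y)^2 ≤ iteratedFDeriv ℝ 2 f z ![y, y] := by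
  intro r hr hr1 z hz hz1 y
  have hf_eq : f =ᶠ[𝓝 z] fun w => negLogOneSubSqrt (‖w‖ ^ 2) := by
    filter_upwards [(isOpen_Ioo.preimage continuous_norm).mem_nhds
      (show ‖z‖ ∈ Ioo (1/2 : ℝ) 1 from ⟨by linarith, hz1⟩)] with w ⟨hw, hw1⟩
    rw [hf w hw hw1, negLogOneSubSqrt, sqrt_sq (norm_nonneg w)]
  have hu : ‖z‖ ^ 2 ∈ Ioo (0 : ℝ) 1 := ⟨by nlinarith, by nlinarith⟩
  have hgrad_sq := sq_fderiv_comp_norm_sq_le_iteratedFDeriv_two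
    (eventually_of_mem (Ioo_mem_nhds hu.1 hu.2) fun v hv => hasDerivAt_negLogOneSubSqrt hv)
    (hasDerivAt_negLogOneSubSqrtDeriv hu) (norm_pos_iff.mp (by linarith))
    (negLogOneSubSqrtDeriv_pos hu).le (four_mul_mul_negLogOneSubSqrtDeriv_sq hu).le y
  rw [hf_eq.fderiv_eq, (hf_eq.iteratedFDeriv ℝ 2).eq_of_nhds]
  have hγ : 2 - 1 / r ≤ 1 := by linarith [one_le_one_div (by linarith : 0 < r) hr1.le]
  exact (mul_le_of_le_one_left (sq_nonneg _) hγ).trans hgrad_sq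
end

section
/- Let f: ℝ^k → [0,∞] be convex and lower semicontinuous, η > 0, and F_η = {z : f(z) < η} nonempty and open. If u ∈ H¹(V;ℝ^k) and u_η = Φ_η(u) where Φ_η is the projection onto the closure of F_η, then f(u_η(x)) ≤ f(u(x)) for a.e. x, and if f(u) ∈ L¹(V) then f(u_η) → f(u) in L¹(V) as η → ∞. -/
/-!
Lower semicontinuity makes `closure {f < η}` a subset of `{f ≤ η}`, and the nearest point
projection onto it fixes `{f < η}`; hence `f (Φ_η z) ≤ f z`, with equality as soon as
`η > f z`. Convexity makes `Φ_η` the projection onto a closed convex set, hence 1-Lipschitz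
and in particular measurable, so dominated convergence with dominating function `f ∘ u`
gives the `L¹` convergence.
-/

open MeasureTheory Metric Filter
open scoped RealInnerProductSpace

section NearestPoint

variable {E : Type*} [NormedAddCommGroup E]

def IsNearestPointIn (K : Set E) (x p : E) : Prop :=
  p ∈ K ∧ ∀ y ∈ K, ‖x - p‖ ≤ ‖x - y‖

theorem IsNearestPointIn.eq_of_mem {K : Set E} {x p : E} (h : IsNearestPointIn K x p)
    (hx : x ∈ K) : p = x := by
  have h0 : ‖x - p‖ ≤ 0 := by simpa using h.2 x hx
  exact (sub_eq_zero.mp (norm_le_zero_iff.mp h0)).symm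

variable [InnerProductSpace ℝ E]

theorem IsNearestPointIn.inner_sub_le_zero {K : Set E} (hK : Convex ℝ K) {x p : E}
    (h : IsNearestPointIn K x p) {w : E} (hw : w ∈ K) : ⟪x - p, w - p⟫ ≤ 0 := by
  have : Nonempty K := ⟨⟨p, h.1⟩⟩
  have hinf : ‖x - p‖ = ⨅ w : K, ‖x - (w : E)‖ := by
    refine le_antisymm (le_ciInf fun w => h.2 w w.2) (ciInf_le ⟨0, ?_⟩ (⟨p, h.1⟩ : K))
    rintro a ⟨w, rfl⟩
    exact norm_nonneg _
  exact (norm_eq_iInf_iff_real_inner_le_zero hK h.1).1 hinf w hw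

theorem IsNearestPointIn.norm_sub_le {K : Set E} (hK : Convex ℝ K) {x y p q : E}
    (hp : IsNearestPointIn K x p) (hq : IsNearestPointIn K y q) : ‖p - q‖ ≤ ‖x - y‖ := by
  have hx : ⟪x - p, q - p⟫ ≤ 0 := hp.inner_sub_le_zero hK hq.1
  have hy : ⟪y - q, p - q⟫ ≤ 0 := hq.inner_sub_le_zero hK hp.1
  -- the two variational inequalities add up to `‖p - q‖² ≤ ⟪x - y, p - q⟫`
  have hsq : ‖p - q‖ ^ 2 ≤ ‖x - y‖ * ‖p - q‖ := by
    have hsplit : ⟪x - y, p - q⟫ = ‖p - q‖ ^ 2 - ⟪x - p, q - p⟫ - ⟪y - q, p - q⟫ := by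
      rw [← real_inner_self_eq_norm_sq]
      simp only [inner_sub_left, inner_sub_right, real_inner_comm]
      ring
    linarith [real_inner_le_norm (x - y) (p - q)]
  nlinarith [norm_nonneg (p - q), norm_nonneg (x - y)]

theorem lipschitzWith_one_of_isNearestPointIn {K : Set E} (hK : Convex ℝ K) {Φ : E → E}
    (hΦ : ∀ x, IsNearestPointIn K x (Φ x)) : LipschitzWith 1 Φ :=
  LipschitzWith.of_dist_le_mul fun x y => by
    simpa [dist_eq_norm] using (hΦ x).norm_sub_le hK (hΦ y)

end NearestPoint

theorem LowerSemicontinuous.closure_setOf_lt_subset {X : Type*} [TopologicalSpace X]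
    {f : X → ℝ} (hf : LowerSemicontinuous f) (η : ℝ) :
    closure {z | f z < η} ⊆ {z | f z ≤ η} :=
  closure_minimal (fun _ => le_of_lt (α := ℝ)) (hf.isClosed_preimage η)

theorem LowerSemicontinuous.le_of_isNearestPointIn_closure_setOf_lt {E : Type*}
    [NormedAddCommGroup E] {f : E → ℝ} (hf : LowerSemicontinuous f) {η : ℝ} {x p : E}
    (h : IsNearestPointIn (closure {z | f z < η}) x p) : f p ≤ f x := by
  by_cases hx : f x < η
  · rw [h.eq_of_mem (subset_closure hx)]
  · exact (hf.closure_setOf_lt_subset η h.1).trans (not_lt.mp hx)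

theorem stmt_17_general {n k : ℕ} (f : EuclideanSpace ℝ (Fin k) → ℝ)
    (hconv : ConvexOn ℝ Set.univ f) (hlsc : LowerSemicontinuous f)
    (hnonneg : ∀ z, 0 ≤ f z)
    (η₀ : ℝ)
    (Φ : ℝ → EuclideanSpace ℝ (Fin k) → EuclideanSpace ℝ (Fin k))
    (hΦ : ∀ η : ℝ, η₀ < η → ∀ x,
      Φ η x ∈ closure {z | f z < η} ∧
      ∀ y ∈ closure {z | f z < η}, ‖x - Φ η x‖ ≤ ‖x - y‖)
    (V : Set (EuclideanSpace ℝ (Fin n)))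
    (u : EuclideanSpace ℝ (Fin n) → EuclideanSpace ℝ (Fin k))
    (hu : AEStronglyMeasurable u (volume.restrict V)) :
    (∀ η : ℝ, η₀ < η → ∀ x, f (Φ η (u x)) ≤ f (u x)) ∧
    (IntegrableOn (fun x => f (u x)) V →
      Tendsto (fun η : ℝ => ∫ x in V, |f (Φ η (u x)) - f (u x)|) atTop (nhds 0)) := by
  have hproj : ∀ η, η₀ < η → ∀ x, IsNearestPointIn (closure {z | f z < η}) x (Φ η x) := hΦ
  have hdecr : ∀ η, η₀ < η → ∀ x, f (Φ η (u x)) ≤ f (u x) := fun η hη x =>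
    hlsc.le_of_isNearestPointIn_closure_setOf_lt (hproj η hη (u x))
  refine ⟨hdecr, fun hint => ?_⟩
  have hmeas : ∀ η, η₀ < η →
      AEStronglyMeasurable (fun x => |f (Φ η (u x)) - f (u x)|) (volume.restrict V) := by
    intro η hη
    have hK : Convex ℝ (closure {z | f z < η}) := by
      simpa only [Set.sep_univ] using (hconv.convex_lt η).closure
    have hΦu := ((lipschitzWith_one_of_isNearestPointIn hK (hproj η hη)).continuous
      |>.comp_aestronglyMeasurable hu).aemeasurable
    exact ((hlsc.measurable.comp_aemeasurable hΦu).sub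
      (hlsc.measurable.comp_aemeasurable hu.aemeasurable)).abs.aestronglyMeasurable
  have hbound : ∀ η, η₀ < η → ∀ x, ‖|f (Φ η (u x)) - f (u x)|‖ ≤ f (u x) := by
    intro η hη x
    rw [Real.norm_eq_abs, abs_abs, abs_of_nonpos (sub_nonpos.mpr (hdecr η hη x))]
    linarith [hnonneg (Φ η (u x))]
  have hlim : ∀ x, Tendsto (fun η => |f (Φ η (u x)) - f (u x)|) atTop (nhds 0) := by
    intro x
    refine tendsto_const_nhds.congr' ?_
    filter_upwards [eventually_gt_atTop (max η₀ (f (u x)))] with η hη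
    rw [(hproj η (le_max_left _ _ |>.trans_lt hη) (u x)).eq_of_mem
      (subset_closure (le_max_right _ _ |>.trans_lt hη)), sub_self, abs_zero]
  simpa using tendsto_integral_filter_of_dominated_convergence (fun x => f (u x))
    ((eventually_gt_atTop η₀).mono hmeas)
    ((eventually_gt_atTop η₀).mono fun η hη => ae_of_all _ (hbound η hη)) hint
    (ae_of_all _ hlim)

/-- Truncation by projecting onto sublevel sets of a convex function: the value
of `f` does not increase, and `f(u_η) → f(u)` in `L¹` as `η → ∞`. -/
theorem stmt_17 {n k : ℕ} (f : EuclideanSpace ℝ (Fin k) → ℝ)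
    (hconv : ConvexOn ℝ Set.univ f) (hlsc : LowerSemicontinuous f)
    (hnonneg : ∀ z, 0 ≤ f z)
    (η₀ : ℝ) (hne : ∀ η : ℝ, η₀ < η → ({z | f z < η} : Set _).Nonempty)
    (hopen : ∀ η : ℝ, η₀ < η → IsOpen ({z | f z < η} : Set _))
    (Φ : ℝ → EuclideanSpace ℝ (Fin k) → EuclideanSpace ℝ (Fin k))
    (hΦ : ∀ η : ℝ, η₀ < η → ∀ x,
      Φ η x ∈ closure {z | f z < η} ∧
      ∀ y ∈ closure {z | f z < η}, ‖x - Φ η x‖ ≤ ‖x - y‖)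
    (V : Set (EuclideanSpace ℝ (Fin n))) (hV : MeasurableSet V)
    (u : EuclideanSpace ℝ (Fin n) → EuclideanSpace ℝ (Fin k))
    (hu : AEStronglyMeasurable u (volume.restrict V)) :
    (∀ η : ℝ, η₀ < η → ∀ x, f (Φ η (u x)) ≤ f (u x)) ∧
    (IntegrableOn (fun x => f (u x)) V →
      Tendsto (fun η : ℝ => ∫ x in V, |f (Φ η (u x)) - f (u x)|) atTop (nhds 0)) :=
  stmt_17_general f hconv hlsc hnonneg η₀ Φ hΦ V u hu
end
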